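/- Let d ≥ 1, 1 ≤ s ≤ d, γ > 1, λ > 0, κ > 0, and set c₀ = (γ+1)/(γ−1). Let Ĉ be a real d×d symmetric positive semidefinite matrix and ε a real d×d matrix such that: (i) for every u in the cone C(s,c₀), uᵀĈu ≥ κ²·‖u‖₂²; and (ii) every entry of ε has absolute value at most λ/γ. Let A₀ be a row-s-sparse d×d matrix and let Â be a minimizer over d×d matrices of L(A) = tr(Aᵀε) + ½·tr((A−A₀)Ĉ(A−A₀)ᵀ) + λ·|A|₁. Then ‖Â − A₀‖_F ≤ ((1+γ)/(γκ²))·λ·√(d·s), where ‖·‖_F is the Frobenius norm. -/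

import Mathlib

/-!
The objective separates over the rows of `A`, so every row `ah` of `Ahat` minimises
`a ↦ ⟨a, e⟩ + ½ (a - a₀)ᵀ Ĉ (a - a₀) + λ |a|₁`, where `e`, `a₀` are the matching rows of `ε`, `A₀`.
Let `u = ah - a₀` and let `S`, with `|S| ≤ s`, be the support of `a₀`. Optimality along the
segment from `ah` to `a₀` gives the basic inequality
`uᵀĈu ≤ (λ/γ) |u|₁ + λ (|u_S|₁ - |u_Sᶜ|₁)`.
Since `Ĉ` is positive semidefinite, this forces `|u_Sᶜ|₁ ≤ c₀ |u_S|₁`, so `u` lies in the cone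
`C(s, c₀)`. The restricted eigenvalue condition and Cauchy–Schwarz then give
`κ² ‖u‖² ≤ λ (1 + 1/γ) |u_S|₁ ≤ λ (1 + 1/γ) √s ‖u‖`, and summing the squared row bounds over the
`d` rows yields the Frobenius bound.
-/

open Matrix

/-- Entrywise ℓ¹ norm of a matrix. -/
noncomputable def matL1 {d : ℕ} (M : Matrix (Fin d) (Fin d) ℝ) : ℝ :=
  ∑ i, ∑ j, |M i j|

/-- The Lasso objective `L(A) = tr(Aᵀ ε) + ½ tr((A - A₀) Ĉ (A - A₀)ᵀ) + λ |A|₁`. -/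
noncomputable def lassoObj {d : ℕ} (Chat eps A₀ : Matrix (Fin d) (Fin d) ℝ) (lam : ℝ)
    (A : Matrix (Fin d) (Fin d) ℝ) : ℝ :=
  (Aᵀ * eps).trace + (1 / 2) * ((A - A₀) * Chat * (A - A₀)ᵀ).trace + lam * matL1 A

/-- The cone `C(s, c₀)`: vectors whose ℓ¹ norm is at most `(1 + c₀)` times the ℓ¹ norm
of their `s` largest (in absolute value) entries. -/
def inCone {d : ℕ} (s : ℕ) (c₀ : ℝ) (u : Fin d → ℝ) : Prop :=
  ∃ I : Finset (Fin d), I.card = s ∧ (∀ i ∈ I, ∀ j ∉ I, |u j| ≤ |u i|) ∧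
    ∑ j, |u j| ≤ (1 + c₀) * ∑ i ∈ I, |u i|

/-- A matrix is row-`s`-sparse if every row has at most `s` nonzero entries. -/
def rowSparse {d : ℕ} (s : ℕ) (A : Matrix (Fin d) (Fin d) ℝ) : Prop :=
  ∀ i, {j | A i j ≠ 0}.ncard ≤ s

/-- Frobenius norm of a matrix. -/
noncomputable def matFrob {d : ℕ} (M : Matrix (Fin d) (Fin d) ℝ) : ℝ :=
  Real.sqrt (∑ i, ∑ j, (M i j) ^ 2)

open Filter Topology

section TopSet

variable {ι : Type*} [DecidableEq ι]

lemma exists_card_eq_forall_le_of_le_card [Fintype ι] {β : Type*} [LinearOrder β] (f : ι → β)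
    {k : ℕ} (hk : k ≤ Fintype.card ι) :
    ∃ I : Finset ι, I.card = k ∧ ∀ i ∈ I, ∀ j ∉ I, f j ≤ f i := by
  induction k with
  | zero => exact ⟨∅, by simp⟩
  | succ k ih =>
    obtain ⟨I, hcard, hI⟩ := ih (Nat.le_of_succ_le hk)
    have hne : Iᶜ.Nonempty := by
      rw [← Finset.card_pos, Finset.card_compl, hcard]
      omega
    obtain ⟨m, hm, hmax⟩ := Iᶜ.exists_max_image f hne
    rw [Finset.mem_compl] at hm
    refine ⟨insert m I, by rw [Finset.card_insert_of_notMem hm, hcard], ?_⟩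
    intro i hi j hj
    rw [Finset.mem_insert, not_or] at hj
    rcases Finset.mem_insert.mp hi with rfl | hiI
    · exact hmax j (Finset.mem_compl.mpr hj.2)
    · exact hI i hiI j hj.2

lemma sum_le_sum_of_card_le_of_forall_le {f : ι → ℝ} (hf : ∀ j, 0 ≤ f j) {S I : Finset ι}
    (hcard : S.card ≤ I.card) (hI : ∀ i ∈ I, ∀ j ∉ I, f j ≤ f i) :
    ∑ j ∈ S, f j ≤ ∑ i ∈ I, f i := by
  suffices h : ∑ j ∈ S \ I, f j ≤ ∑ j ∈ I \ S, f j by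
    rw [← Finset.sum_inter_add_sum_sdiff S I, ← Finset.sum_inter_add_sum_sdiff I S,
      Finset.inter_comm]
    linarith
  rcases (S \ I).eq_empty_or_nonempty with he | hne
  · rw [he, Finset.sum_empty]
    exact Finset.sum_nonneg fun j _ => hf j
  have hcard' : (S \ I).card ≤ (I \ S).card := by
    have := Finset.card_inter_add_card_sdiff S I
    have := Finset.card_inter_add_card_sdiff I S
    rw [Finset.inter_comm] at this
    omega
  have hne' : (I \ S).Nonempty := Finset.card_pos.mp (hne.card_pos.trans_le hcard')
  obtain ⟨m, hm, hmin⟩ := (I \ S).exists_min_image f hne'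
  calc ∑ j ∈ S \ I, f j ≤ (S \ I).card • f m :=
        Finset.sum_le_card_nsmul _ _ _ fun j hj =>
          hI m (Finset.mem_sdiff.mp hm).1 j (Finset.mem_sdiff.mp hj).2
    _ ≤ (I \ S).card • f m := nsmul_le_nsmul_left (hf m) hcard'
    _ ≤ ∑ j ∈ I \ S, f j := Finset.card_nsmul_le_sum _ _ _ hmin

end TopSet

lemma inCone_of_sum_compl_le {d s : ℕ} (hsd : s ≤ d) {c₀ : ℝ} (hc₀ : 0 ≤ c₀)
    {u : Fin d → ℝ} {S : Finset (Fin d)} (hS : S.card ≤ s)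
    (h : ∑ j ∈ Sᶜ, |u j| ≤ c₀ * ∑ j ∈ S, |u j|) : inCone s c₀ u := by
  obtain ⟨I, hIcard, hI⟩ :=
    exists_card_eq_forall_le_of_le_card (fun j => |u j|) (hsd.trans (Fintype.card_fin d).ge)
  have hSI : ∑ j ∈ S, |u j| ≤ ∑ i ∈ I, |u i| :=
    sum_le_sum_of_card_le_of_forall_le (fun j => abs_nonneg _) (hS.trans hIcard.ge) hI
  refine ⟨I, hIcard, hI, ?_⟩
  rw [← Finset.sum_add_sum_compl S]
  nlinarith

section LassoRow

variable {ι : Type*} [Fintype ι]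

noncomputable def lassoRowObj (C : Matrix ι ι ℝ) (e a₀ : ι → ℝ) (lam : ℝ) (a : ι → ℝ) : ℝ :=
  a ⬝ᵥ e + 1 / 2 * ((a - a₀) ⬝ᵥ C *ᵥ (a - a₀)) + lam * ∑ j, |a j|

lemma sum_abs_convex_comb_le {t : ℝ} (ht₀ : 0 ≤ t) (ht₁ : t ≤ 1) (x y : ι → ℝ) :
    ∑ j, |(1 - t) * x j + t * y j| ≤ (1 - t) * ∑ j, |x j| + t * ∑ j, |y j| := by
  rw [Finset.mul_sum, Finset.mul_sum, ← Finset.sum_add_distrib]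
  refine Finset.sum_le_sum fun j _ => (abs_add_le _ _).trans_eq ?_
  rw [abs_mul, abs_mul, abs_of_nonneg (sub_nonneg.mpr ht₁), abs_of_nonneg ht₀]

/-- Comparing `ah` with `a₀` alone would only bound half of the quadratic term; the full term
comes from comparing it with `ah - t • (ah - a₀)` and letting `t → 0⁺`. -/
lemma lassoRow_basic_inequality {C : Matrix ι ι ℝ} {e a₀ ah : ι → ℝ} {lam : ℝ} (hlam : 0 ≤ lam)
    (hm : ∀ a, lassoRowObj C e a₀ lam ah ≤ lassoRowObj C e a₀ lam a) :
    (ah - a₀) ⬝ᵥ C *ᵥ (ah - a₀) ≤ -((ah - a₀) ⬝ᵥ e) + lam * (∑ j, |a₀ j| - ∑ j, |ah j|) := by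
  set u := ah - a₀
  set q := u ⬝ᵥ C *ᵥ u
  set R := -(u ⬝ᵥ e) + lam * (∑ j, |a₀ j| - ∑ j, |ah j|)
  have hstep : ∀ t ∈ Set.Ioc (0 : ℝ) 1, (1 - t / 2) * q ≤ R := by
    rintro t ⟨ht₀, ht₁⟩
    have hpoint : ∀ j, (ah - t • u) j = (1 - t) * ah j + t * a₀ j := fun j => by
      simp only [u, Pi.sub_apply, Pi.smul_apply, smul_eq_mul]; ring
    have hquad : (ah - t • u - a₀) ⬝ᵥ C *ᵥ (ah - t • u - a₀) = (1 - t) ^ 2 * q := by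
      rw [show ah - t • u - a₀ = (1 - t) • u by module, mulVec_smul, smul_dotProduct,
        dotProduct_smul, smul_eq_mul, smul_eq_mul]
      ring
    have hl1 : lam * ∑ j, |(ah - t • u) j| ≤ lam * ((1 - t) * ∑ j, |ah j| + t * ∑ j, |a₀ j|) := by
      simp only [hpoint]
      exact mul_le_mul_of_nonneg_left (sum_abs_convex_comb_le ht₀.le ht₁ ah a₀) hlam
    have hlin : (ah - t • u) ⬝ᵥ e = ah ⬝ᵥ e - t * (u ⬝ᵥ e) := by
      rw [sub_dotProduct, smul_dotProduct, smul_eq_mul]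
    have hmin : ah ⬝ᵥ e + 1 / 2 * q + lam * ∑ j, |ah j|
        ≤ ah ⬝ᵥ e - t * (u ⬝ᵥ e) + 1 / 2 * ((1 - t) ^ 2 * q) + lam * ∑ j, |(ah - t • u) j| := by
      have h := hm (ah - t • u)
      rw [lassoRowObj, lassoRowObj, hquad, hlin] at h
      exact h
    have : t * ((1 - t / 2) * q) ≤ t * R := by nlinarith
    exact le_of_mul_le_mul_left this ht₀
  have hlim : Tendsto (fun t : ℝ => (1 - t / 2) * q) (𝓝[>] 0) (𝓝 q) := by
    have hcont : Continuous fun t : ℝ => (1 - t / 2) * q := by fun_prop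
    simpa using hcont.continuousWithinAt (s := Set.Ioi 0) (x := 0) |>.tendsto
  exact le_of_tendsto hlim (mem_of_superset (Ioc_mem_nhdsGT one_pos) hstep)

lemma abs_dotProduct_le_mul_sum_abs {c : ℝ} {e : ι → ℝ} (he : ∀ j, |e j| ≤ c) (u : ι → ℝ) :
    |u ⬝ᵥ e| ≤ c * ∑ j, |u j| := by
  rw [Finset.mul_sum]
  refine (Finset.abs_sum_le_sum_abs _ _).trans (Finset.sum_le_sum fun j _ => ?_)
  rw [abs_mul, mul_comm]
  exact mul_le_mul_of_nonneg_right (he j) (abs_nonneg _)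

lemma sum_abs_sub_sum_abs_le [DecidableEq ι] {S : Finset ι} {a₀ : ι → ℝ}
    (ha₀ : ∀ j ∉ S, a₀ j = 0) (a : ι → ℝ) :
    ∑ j, |a₀ j| - ∑ j, |a j| ≤ ∑ j ∈ S, |a j - a₀ j| - ∑ j ∈ Sᶜ, |a j - a₀ j| := by
  have hoff : ∀ j ∈ Sᶜ, |a₀ j| = 0 ∧ |a j - a₀ j| = |a j| := fun j hj => by
    simp [ha₀ j (Finset.mem_compl.mp hj)]
  rw [← Finset.sum_add_sum_compl S, ← Finset.sum_add_sum_compl S (fun j => |a j|),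
    Finset.sum_congr rfl fun j hj => (hoff j hj).1,
    Finset.sum_congr rfl fun j hj => (hoff j hj).2, Finset.sum_const_zero]
  have : ∑ j ∈ S, |a₀ j| - ∑ j ∈ S, |a j| ≤ ∑ j ∈ S, |a j - a₀ j| := by
    rw [← Finset.sum_sub_distrib]
    exact Finset.sum_le_sum fun j _ => by
      rw [abs_sub_comm]; exact abs_sub_abs_le_abs_sub _ _
  linarith

lemma sum_abs_le_sqrt_card_mul_sqrt_sum_sq (S : Finset ι) (u : ι → ℝ) :
    ∑ j ∈ S, |u j| ≤ √S.card * √(∑ j, u j ^ 2) := by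
  rw [← Real.sqrt_mul (Nat.cast_nonneg _)]
  refine Real.le_sqrt_of_sq_le ((sq_sum_le_card_mul_sum_sq).trans ?_)
  refine mul_le_mul_of_nonneg_left ?_ (Nat.cast_nonneg _)
  simp only [sq_abs]
  exact Finset.sum_le_sum_of_subset_of_nonneg (Finset.subset_univ S) fun j _ _ => sq_nonneg _

lemma lassoRow_quad_le [DecidableEq ι] {C : Matrix ι ι ℝ} {e a₀ ah : ι → ℝ} {lam c : ℝ}
    (hlam : 0 ≤ lam) (he : ∀ j, |e j| ≤ c) {S : Finset ι} (ha₀ : ∀ j ∉ S, a₀ j = 0)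
    (hm : ∀ a, lassoRowObj C e a₀ lam ah ≤ lassoRowObj C e a₀ lam a) :
    (ah - a₀) ⬝ᵥ C *ᵥ (ah - a₀) ≤
      c * (∑ j ∈ S, |(ah - a₀) j| + ∑ j ∈ Sᶜ, |(ah - a₀) j|) +
        lam * (∑ j ∈ S, |(ah - a₀) j| - ∑ j ∈ Sᶜ, |(ah - a₀) j|) := by
  have hdot := neg_le_abs ((ah - a₀) ⬝ᵥ e) |>.trans (abs_dotProduct_le_mul_sum_abs he _)
  rw [← Finset.sum_add_sum_compl S] at hdot
  have hl1 := mul_le_mul_of_nonneg_left (sum_abs_sub_sum_abs_le ha₀ ah) hlam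
  have := lassoRow_basic_inequality hlam hm
  simp only [Pi.sub_apply] at hdot hl1 this ⊢
  linarith

end LassoRow

lemma lassoObj_eq_sum_lassoRowObj {d : ℕ} (C eps A₀ : Matrix (Fin d) (Fin d) ℝ) (lam : ℝ)
    (A : Matrix (Fin d) (Fin d) ℝ) :
    lassoObj C eps A₀ lam A = ∑ i, lassoRowObj C (eps i) (A₀ i) lam (A i) := by
  have hlin : (Aᵀ * eps).trace = ∑ i, A i ⬝ᵥ eps i := by
    simp only [Matrix.trace, Matrix.diag, Matrix.mul_apply, Matrix.transpose_apply, dotProduct]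
    exact Finset.sum_comm
  have hquad : ((A - A₀) * C * (A - A₀)ᵀ).trace = ∑ i, (A - A₀) i ⬝ᵥ C *ᵥ (A - A₀) i := by
    simp only [Matrix.trace, Matrix.diag, Matrix.mul_apply, Matrix.transpose_apply, dotProduct,
      Matrix.mulVec, Finset.sum_mul, Finset.mul_sum]
    refine Finset.sum_congr rfl fun i _ => Finset.sum_comm.trans ?_
    exact Finset.sum_congr rfl fun j _ => Finset.sum_congr rfl fun k _ => by ring
  simp only [lassoObj, lassoRowObj, hlin, hquad, matL1, Finset.mul_sum, Finset.sum_add_distrib]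
  rfl

lemma lassoRowObj_le_of_forall_lassoObj_le {d : ℕ} {C eps A₀ Ahat : Matrix (Fin d) (Fin d) ℝ}
    {lam : ℝ} (hmin : ∀ A, lassoObj C eps A₀ lam Ahat ≤ lassoObj C eps A₀ lam A) (i : Fin d)
    (a : Fin d → ℝ) :
    lassoRowObj C (eps i) (A₀ i) lam (Ahat i) ≤ lassoRowObj C (eps i) (A₀ i) lam a := by
  have h := hmin (Ahat.updateRow i a)
  simp only [lassoObj_eq_sum_lassoRowObj] at h
  rw [← Finset.add_sum_erase _ _ (Finset.mem_univ i),
    ← Finset.add_sum_erase _ _ (Finset.mem_univ i), updateRow_self] at h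
  have hrest : ∑ j ∈ Finset.univ.erase i, lassoRowObj C (eps j) (A₀ j) lam (Ahat.updateRow i a j)
      = ∑ j ∈ Finset.univ.erase i, lassoRowObj C (eps j) (A₀ j) lam (Ahat j) :=
    Finset.sum_congr rfl fun j hj => by rw [updateRow_ne (Finset.ne_of_mem_erase hj)]
  linarith

lemma le_mul_of_div_mul_add_mul_sub_nonneg {γ lam a b : ℝ} (hγ : 1 < γ) (hlam : 0 < lam)
    (h : 0 ≤ lam / γ * (a + b) + lam * (a - b)) : b ≤ (γ + 1) / (γ - 1) * a := by
  have hfac : lam / γ * (a + b) + lam * (a - b) = lam / γ * ((a + b) + γ * (a - b)) := by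
    field_simp
  have := nonneg_of_mul_nonneg_right (h.trans_eq hfac) (by positivity)
  rw [div_mul_eq_mul_div, le_div_iff₀ (sub_pos.mpr hγ)]
  linarith

lemma lassoRow_error_bound {d s : ℕ} (hsd : s ≤ d) {γ lam κ c₀ : ℝ} (hγ : 1 < γ)
    (hlam : 0 < lam) (hκ : 0 < κ) (hc₀ : c₀ = (γ + 1) / (γ - 1))
    {C : Matrix (Fin d) (Fin d) ℝ} (hC : C.PosSemidef)
    (hRE : ∀ u : Fin d → ℝ, inCone s c₀ u → κ ^ 2 * ∑ i, u i ^ 2 ≤ u ⬝ᵥ C *ᵥ u)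
    {e a₀ ah : Fin d → ℝ} (he : ∀ j, |e j| ≤ lam / γ) {S : Finset (Fin d)} (hS : S.card ≤ s)
    (ha₀ : ∀ j ∉ S, a₀ j = 0) (hm : ∀ a, lassoRowObj C e a₀ lam ah ≤ lassoRowObj C e a₀ lam a) :
    √(∑ j, (ah - a₀) j ^ 2) ≤ (1 + γ) / (γ * κ ^ 2) * lam * √s := by
  have hq := lassoRow_quad_le hlam.le he ha₀ hm
  set u := ah - a₀
  set a := ∑ j ∈ S, |u j|
  set b := ∑ j ∈ Sᶜ, |u j|
  set N := √(∑ j, u j ^ 2)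
  have hq₀ : 0 ≤ u ⬝ᵥ C *ᵥ u := by simpa using hC.dotProduct_mulVec_nonneg u
  have hb₀ : 0 ≤ b := Finset.sum_nonneg fun j _ => abs_nonneg _
  have hcone : b ≤ c₀ * a := hc₀ ▸ le_mul_of_div_mul_add_mul_sub_nonneg hγ hlam (hq₀.trans hq)
  have hc₀₀ : 0 ≤ c₀ := hc₀ ▸ div_nonneg (by linarith) (by linarith)
  have hRE' := hRE u (inCone_of_sum_compl_le hsd hc₀₀ hS hcone)
  have hCS : a ≤ √s * N :=
    (sum_abs_le_sqrt_card_mul_sqrt_sum_sq S u).trans <|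
      mul_le_mul_of_nonneg_right (Real.sqrt_le_sqrt (by exact_mod_cast hS)) (Real.sqrt_nonneg _)
  have hN : N ^ 2 = ∑ j, u j ^ 2 := Real.sq_sqrt (Finset.sum_nonneg fun j _ => sq_nonneg _)
  have hmain : κ ^ 2 * N * N ≤ lam * (1 + 1 / γ) * √s * N :=
    calc κ ^ 2 * N * N = κ ^ 2 * ∑ j, u j ^ 2 := by rw [← hN]; ring
      _ ≤ lam / γ * (a + b) + lam * (a - b) := hRE'.trans hq
      _ = lam * (1 + 1 / γ) * a - (lam * b - lam / γ * b) := by ring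
      _ ≤ lam * (1 + 1 / γ) * a := by
          linarith [mul_le_mul_of_nonneg_right (div_le_self hlam.le hγ.le) hb₀]
      _ ≤ lam * (1 + 1 / γ) * √s * N := by
          rw [mul_assoc _ √s]
          exact mul_le_mul_of_nonneg_left hCS (by positivity)
  rcases (show 0 ≤ N from Real.sqrt_nonneg _).eq_or_lt with hN₀ | hN₀
  · rw [← hN₀]
    positivity
  have := le_of_mul_le_mul_right hmain hN₀
  rw [show (1 + γ) / (γ * κ ^ 2) * lam * √s = lam * (1 + 1 / γ) * √s / κ ^ 2 by
    field_simp; ring, le_div_iff₀ (by positivity)]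
  linarith

lemma exists_support_card_le_of_rowSparse {d s : ℕ} {A : Matrix (Fin d) (Fin d) ℝ}
    (hA : rowSparse s A) (i : Fin d) : ∃ S : Finset (Fin d), S.card ≤ s ∧ ∀ j ∉ S, A i j = 0 := by
  refine ⟨Finset.univ.filter (A i · ≠ 0), ?_, fun j hj => by simpa using hj⟩
  have := hA i
  rwa [← Finset.coe_filter_univ, Set.ncard_coe_finset] at this

lemma matFrob_le_sqrt_mul_of_forall_row_le {d : ℕ} {M : Matrix (Fin d) (Fin d) ℝ} {B : ℝ}
    (hB : 0 ≤ B) (h : ∀ i, √(∑ j, M i j ^ 2) ≤ B) : matFrob M ≤ √d * B := by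
  calc matFrob M ≤ √(∑ _i : Fin d, B ^ 2) :=
        Real.sqrt_le_sqrt (Finset.sum_le_sum fun i _ => (Real.sqrt_le_iff.mp (h i)).2)
    _ = √d * B := by
        rw [Finset.sum_const, Finset.card_univ, Fintype.card_fin, nsmul_eq_mul,
          Real.sqrt_mul (Nat.cast_nonneg d), Real.sqrt_sq hB]

theorem stmt_10_general (d s : ℕ) (hsd : s ≤ d)
    (γ lam κ : ℝ) (hγ : 1 < γ) (hlam : 0 < lam) (hκ : 0 < κ)
    (c₀ : ℝ) (hc₀ : c₀ = (γ + 1) / (γ - 1))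
    (Chat eps : Matrix (Fin d) (Fin d) ℝ) (hC : Chat.PosSemidef)
    (hRE : ∀ u : Fin d → ℝ, inCone s c₀ u → κ ^ 2 * ∑ i, u i ^ 2 ≤ u ⬝ᵥ Chat *ᵥ u)
    (heps : ∀ i j, |eps i j| ≤ lam / γ)
    (A₀ : Matrix (Fin d) (Fin d) ℝ) (hA₀ : rowSparse s A₀)
    (Ahat : Matrix (Fin d) (Fin d) ℝ)
    (hmin : ∀ A : Matrix (Fin d) (Fin d) ℝ,
      lassoObj Chat eps A₀ lam Ahat ≤ lassoObj Chat eps A₀ lam A) :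
    matFrob (Ahat - A₀) ≤ (1 + γ) / (γ * κ ^ 2) * lam * Real.sqrt (d * s) := by
  have hrow : ∀ i, √(∑ j, (Ahat - A₀) i j ^ 2) ≤ (1 + γ) / (γ * κ ^ 2) * lam * √s := fun i => by
    obtain ⟨S, hS, hA₀S⟩ := exists_support_card_le_of_rowSparse hA₀ i
    exact lassoRow_error_bound hsd hγ hlam hκ hc₀ hC hRE (heps i) hS hA₀S
      (lassoRowObj_le_of_forall_lassoObj_le hmin i)
  calc matFrob (Ahat - A₀) ≤ √d * ((1 + γ) / (γ * κ ^ 2) * lam * √s) :=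
        matFrob_le_sqrt_mul_of_forall_row_le (by positivity) hrow
    _ = (1 + γ) / (γ * κ ^ 2) * lam * Real.sqrt (d * s) := by
        rw [Real.sqrt_mul (Nat.cast_nonneg d)]
        ring

/-- Frobenius-norm error bound for the Lasso. -/
theorem stmt_10 (d s : ℕ) (hd : 1 ≤ d) (hs : 1 ≤ s) (hsd : s ≤ d)
    (γ lam κ : ℝ) (hγ : 1 < γ) (hlam : 0 < lam) (hκ : 0 < κ)
    (c₀ : ℝ) (hc₀ : c₀ = (γ + 1) / (γ - 1))
    (Chat eps : Matrix (Fin d) (Fin d) ℝ) (hC : Chat.PosSemidef)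
    (hRE : ∀ u : Fin d → ℝ, inCone s c₀ u → κ ^ 2 * ∑ i, u i ^ 2 ≤ u ⬝ᵥ Chat *ᵥ u)
    (heps : ∀ i j, |eps i j| ≤ lam / γ)
    (A₀ : Matrix (Fin d) (Fin d) ℝ) (hA₀ : rowSparse s A₀)
    (Ahat : Matrix (Fin d) (Fin d) ℝ)
    (hmin : ∀ A : Matrix (Fin d) (Fin d) ℝ,
      lassoObj Chat eps A₀ lam Ahat ≤ lassoObj Chat eps A₀ lam A) :
    matFrob (Ahat - A₀) ≤ (1 + γ) / (γ * κ ^ 2) * lam * Real.sqrt (d * s) :=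
  stmt_10_general d s hsd γ lam κ hγ hlam hκ c₀ hc₀ Chat eps hC hRE heps A₀ hA₀ Ahat hmin
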